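/- Assume the setup below, assume in addition that F is μ_F-strongly convex, and let U = Diag(u) be a diagonal matrix with entries 0 < u^j ≤ 2/L_Ω for all j; put u_max = max_j u^j and u_min = min_j u^j. Fix w_{t-1}, v_{t-1} ∈ ℝ^d and set w_t = prox_R^{U^{-1}}(w_{t-1} − U v_{t-1}). For each b-tuple ι = (i_1,…,i_b) ∈ {1,…,n}^b define v_t(ι) = (1/b)∑_{j=1}^b (∇f_{i_j}(w_t) − ∇f_{i_j}(w_{t-1}))/(q_{i_j} n) + v_{t-1} and w_{t+1}(ι) = prox_R^{U^{-1}}(w_t − U v_t(ι)). Then ∑_{ι ∈ {1,…,n}^b} (∏_{j=1}^b q_{i_j}) · ‖w_{t+1}(ι) − w_t‖_{U^{-1}}² ≤ ( 1 − μ_F² u_min (2/L_Ω − u_max) ) · ‖w_t − w_{t-1}‖_{U^{-1}}². -/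

import Mathlib

open scoped BigOperators RealInnerProductSpace

/-- `ℝ^d` as Euclidean space. -/
abbrev Euc (d : ℕ) := EuclideanSpace ℝ (Fin d)

/-- Action of a `d × d` real matrix on a vector of `ℝ^d`. -/
noncomputable def mdot {d : ℕ} (M : Matrix (Fin d) (Fin d) ℝ) (x : Euc d) : Euc d :=
  Matrix.toEuclideanLin M x

/-- The quadratic form `‖x‖_M² = xᵀ M x` associated with a matrix `M`. -/
noncomputable def qf {d : ℕ} (M : Matrix (Fin d) (Fin d) ℝ) (x : Euc d) : ℝ :=
  ⟪x, mdot M x⟫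

/-- `u` is a point of the scaled proximal operator `prox_R^M (w)`, i.e. a minimizer of
`y ↦ (1/2)‖y - w‖_M² + R y`, for an extended-real-valued `R`. -/
def IsProxE {d : ℕ} (R : Euc d → EReal) (M : Matrix (Fin d) (Fin d) ℝ) (w u : Euc d) : Prop :=
  ∀ y, ((2⁻¹ * qf M (u - w) : ℝ) : EReal) + R u ≤ ((2⁻¹ * qf M (y - w) : ℝ) : EReal) + R y

/-- Convexity of an extended-real-valued function on `ℝ^d`. -/
def ERealConvexOn {d : ℕ} (R : Euc d → EReal) : Prop :=
  ∀ x y : Euc d, ∀ a b : ℝ, 0 ≤ a → 0 ≤ b → a + b = 1 →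
    R (a • x + b • y) ≤ (a : EReal) * R x + (b : EReal) * R y

/-- Properness of an extended-real-valued function: never `-∞`, and finite somewhere. -/
def ERealProper {d : ℕ} (R : Euc d → EReal) : Prop :=
  (∀ x, R x ≠ ⊥) ∧ (∃ x, R x ≠ ⊤)

/-- The average `F = (1/n) ∑ᵢ fᵢ`. -/
noncomputable def Favg {d n : ℕ} (f : Fin n → Euc d → ℝ) (x : Euc d) : ℝ :=
  (n : ℝ)⁻¹ * ∑ i, f i x

/-- The averaged gradient `∇F = (1/n) ∑ᵢ ∇fᵢ`. -/
noncomputable def gAvg {d n : ℕ} (gf : Fin n → Euc d → Euc d) (x : Euc d) : Euc d :=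
  (n : ℝ)⁻¹ • ∑ i, gf i x

/-
Write `δ = w_t - w_{t-1}` and `c_i = (n q_i)⁻¹ (∇f_i(w_t) - ∇f_i(w_{t-1}))`, so that
`v_t(ι) - v_{t-1}` is the minibatch mean `Δ(ι)` of the `c_{i_j}`. The scaled prox is firmly
nonexpansive in `‖·‖_{U⁻¹}`, hence `‖w_{t+1}(ι) - w_t‖²_{U⁻¹} ≤ ‖δ - U Δ(ι)‖²_{U⁻¹}
= ‖δ‖²_{U⁻¹} - 2⟪δ, Δ(ι)⟫ + ‖Δ(ι)‖²_U`. Averaging over `ι` and using Jensen, the expected step is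
at most `‖δ‖²_{U⁻¹} - 2γ + u_max ∑ q_i ‖c_i‖²` with `γ = ⟪∇F(w_t) - ∇F(w_{t-1}), δ⟫`.
Co-coercivity of each `∇f_i` gives `∑ q_i ‖c_i‖² ≤ L_Ω γ`, and strong convexity with Jensen gives
`μ_F² ‖δ‖² ≤ ‖∇F(w_t) - ∇F(w_{t-1})‖² ≤ L_Ω γ`; since `‖δ‖² ≥ u_min ‖δ‖²_{U⁻¹}`, the gain
`(2 - u_max L_Ω) γ` is at least `μ_F² u_min (2/L_Ω - u_max) ‖δ‖²_{U⁻¹}`.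
-/

open Set Filter Topology
open scoped NNReal

theorem nonneg_of_norm_sub_le_mul_norm_sub {E F : Type*} [NormedAddCommGroup E] [Nontrivial E]
    [SeminormedAddCommGroup F] {g : E → F} {L : ℝ} (h : ∀ x y, ‖g x - g y‖ ≤ L * ‖x - y‖) :
    0 ≤ L := by
  obtain ⟨x, hx⟩ := exists_ne (0 : E)
  have := (norm_nonneg _).trans (h x 0)
  rw [sub_zero] at this
  exact nonneg_of_mul_nonneg_left this (norm_pos_iff.2 hx)

section InnerProductSpace

variable {E : Type*} [NormedAddCommGroup E] [InnerProductSpace ℝ E]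

theorem norm_sum_smul_sq_le {ι : Type*} {s : Finset ι} {w : ι → ℝ} (hw₀ : ∀ i ∈ s, 0 ≤ w i)
    (hw₁ : ∑ i ∈ s, w i = 1) (x : ι → E) :
    ‖∑ i ∈ s, w i • x i‖ ^ 2 ≤ ∑ i ∈ s, w i * ‖x i‖ ^ 2 :=
  (convexOn_univ_norm.pow (fun x _ => norm_nonneg x) 2).map_sum_le hw₀ hw₁ fun _ _ => mem_univ _

theorem mul_norm_sub_sq_le_inner_of_first_order_bound {μ : ℝ} {F : E → ℝ} {g : E → E}
    (h : ∀ x y, F x + ⟪g x, y - x⟫ + μ / 2 * ‖y - x‖ ^ 2 ≤ F y) (x y : E) :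
    μ * ‖x - y‖ ^ 2 ≤ ⟪g x - g y, x - y⟫ := by
  have hxy := h x y
  have hyx := h y x
  rw [← neg_sub x y, inner_neg_right, norm_neg] at hxy
  rw [inner_sub_left]
  linarith

theorem sq_mul_norm_sq_le_of_mul_norm_sq_le_inner {μ : ℝ} (hμ : 0 ≤ μ) {x y : E}
    (h : μ * ‖x‖ ^ 2 ≤ ⟪y, x⟫) : μ ^ 2 * ‖x‖ ^ 2 ≤ ‖y‖ ^ 2 := by
  have hcs : μ * ‖x‖ ^ 2 ≤ ‖y‖ * ‖x‖ := h.trans (real_inner_le_norm y x)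
  rcases (norm_nonneg x).eq_or_lt with hx | hx
  · rw [← hx, zero_pow two_ne_zero, mul_zero]; positivity
  have : μ * ‖x‖ ≤ ‖y‖ := le_of_mul_le_mul_right (by nlinarith) hx
  nlinarith [mul_nonneg hμ hx.le]

theorem sum_mul_norm_inv_smul_sq_le {n : ℕ} {q L : Fin n → ℝ} {LΩ : ℝ} (hq : ∀ i, 0 < q i)
    (hL : ∀ i, L i / (n * q i) ≤ LΩ) {a : Fin n → E} {δ : E}
    (hcoco : ∀ i, ‖a i‖ ^ 2 ≤ L i * ⟪a i, δ⟫) (hmono : ∀ i, 0 ≤ ⟪a i, δ⟫) :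
    ∑ i, q i * ‖(q i * n)⁻¹ • a i‖ ^ 2 ≤ LΩ * ∑ i, q i * ⟪δ, (q i * n)⁻¹ • a i⟫ := by
  rw [Finset.mul_sum]
  refine Finset.sum_le_sum fun i _ => ?_
  have hn : (0 : ℝ) < n := Nat.cast_pos.2 i.pos
  have hqi := hq i
  rw [norm_smul, real_inner_smul_right, mul_pow, Real.norm_eq_abs, sq_abs, real_inner_comm]
  calc q i * ((q i * n)⁻¹ ^ 2 * ‖a i‖ ^ 2) ≤ q i * ((q i * n)⁻¹ ^ 2 * (L i * ⟪a i, δ⟫)) := by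
        gcongr; exact hcoco i
    _ = L i / (n * q i) * (q i * ((q i * n)⁻¹ * ⟪a i, δ⟫)) := by field_simp
    _ ≤ LΩ * (q i * ((q i * n)⁻¹ * ⟪a i, δ⟫)) := by
        gcongr
        · exact mul_nonneg hqi.le (mul_nonneg (by positivity) (hmono i))
        · exact hL i

end InnerProductSpace

section SmoothConvex

variable {E : Type*} [NormedAddCommGroup E] [InnerProductSpace ℝ E] [CompleteSpace E]
  {f : E → ℝ} {g : E → E}

theorem HasGradientAt.hasDerivAt_comp_add_smul {g' x v : E} {t : ℝ}
    (h : HasGradientAt f g' (x + t • v)) :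
    HasDerivAt (fun s : ℝ => f (x + s • v)) ⟪g', v⟫ t := by
  have hline : HasDerivAt (fun s : ℝ => x + s • v) v t := by
    simpa using ((hasDerivAt_id t).smul_const v).const_add x
  simpa [Function.comp_def] using h.hasFDerivAt.comp_hasDerivAt t hline

theorem ConvexOn.add_inner_sub_le_of_hasGradientAt {g' x : E} (hf : ConvexOn ℝ univ f)
    (h : HasGradientAt f g' x) (y : E) : f x + ⟪g', y - x⟫ ≤ f y := by
  have hline : ConvexOn ℝ univ fun s : ℝ => f (x + s • (y - x)) := by
    have hcomp : (fun s : ℝ => f (x + s • (y - x))) = f ∘ AffineMap.lineMap x y := by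
      ext s
      rw [Function.comp_apply, AffineMap.lineMap_apply_module', add_comm]
    exact hcomp ▸ hf.comp_affineMap (AffineMap.lineMap x y)
  have hderiv : HasDerivAt (fun s : ℝ => f (x + s • (y - x))) ⟪g', y - x⟫ 0 :=
    HasGradientAt.hasDerivAt_comp_add_smul (by simpa using h)
  have hslope : slope (fun s : ℝ => f (x + s • (y - x))) 0 1 = f y - f x := by
    simp [slope_def_field]
  have := hline.le_slope_of_hasDerivAt (mem_univ 0) (mem_univ 1) one_pos hderiv
  linarith

theorem ConvexOn.inner_sub_nonneg_of_hasGradientAt (hf : ConvexOn ℝ univ f)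
    (hg : ∀ x, HasGradientAt f (g x) x) (x y : E) : 0 ≤ ⟪g x - g y, x - y⟫ := by
  have hxy := hf.add_inner_sub_le_of_hasGradientAt (hg x) y
  have hyx := hf.add_inner_sub_le_of_hasGradientAt (hg y) x
  rw [← neg_sub x y, inner_neg_right] at hxy
  rw [inner_sub_left]
  linarith

theorem le_add_inner_add_of_lipschitzWith {K : ℝ≥0} (hg : ∀ x, HasGradientAt f (g x) x)
    (hK : LipschitzWith K g) (x y : E) :
    f y ≤ f x + ⟪g x, y - x⟫ + K / 2 * ‖y - x‖ ^ 2 := by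
  set v := y - x
  let φ : ℝ → ℝ := fun s => f (x + s • v) - s * ⟪g x, v⟫ - K / 2 * s ^ 2 * ‖v‖ ^ 2
  have hφ : ∀ s, HasDerivAt φ (⟪g (x + s • v) - g x, v⟫ - K * s * ‖v‖ ^ 2) s := by
    intro s
    have := (((hg (x + s • v)).hasDerivAt_comp_add_smul (x := x)).sub
      ((hasDerivAt_id s).mul_const ⟪g x, v⟫)).sub
        (((hasDerivAt_pow 2 s).const_mul (K / 2 : ℝ)).mul_const (‖v‖ ^ 2))
    refine this.congr_deriv ?_
    rw [inner_sub_left]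
    ring
  have hφ' : ∀ s ∈ interior (Ici (0 : ℝ)),
      ⟪g (x + s • v) - g x, v⟫ - K * s * ‖v‖ ^ 2 ≤ 0 := by
    intro s hs
    rw [interior_Ici, mem_Ioi] at hs
    have hlip : ‖g (x + s • v) - g x‖ ≤ K * (s * ‖v‖) := by
      simpa [norm_smul, abs_of_pos hs] using hK.norm_sub_le (x + s • v) x
    have := real_inner_le_norm (g (x + s • v) - g x) v
    nlinarith [norm_nonneg v]
  have hanti : AntitoneOn φ (Ici 0) :=
    antitoneOn_of_hasDerivWithinAt_nonpos (convex_Ici 0)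
      (fun s _ => (hφ s).continuousAt.continuousWithinAt)
      (fun s _ => (hφ s).hasDerivWithinAt) hφ'
  have hφ₀ : φ 0 = f x := by simp [φ]
  have hφ₁ : φ 1 = f y - ⟪g x, y - x⟫ - K / 2 * ‖y - x‖ ^ 2 := by simp [φ, v]
  have := hanti self_mem_Ici (mem_Ici.2 zero_le_one) zero_le_one
  linarith

theorem ConvexOn.add_inner_sub_add_norm_sq_le_of_lipschitzWith {K : ℝ≥0} (hf : ConvexOn ℝ univ f)
    (hg : ∀ x, HasGradientAt f (g x) x) (hK : LipschitzWith K g) (hK₀ : 0 < K) (x y : E) :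
    f x + ⟪g x, y - x⟫ + (2 * (K : ℝ))⁻¹ * ‖g y - g x‖ ^ 2 ≤ f y := by
  set w := g y - g x
  -- `z` is a gradient step from `y`: bound `f z` below from `x` and above by the descent lemma.
  set z := y - (K : ℝ)⁻¹ • w
  have hK' : (K : ℝ) ≠ 0 := by positivity
  have lower := hf.add_inner_sub_le_of_hasGradientAt (hg x) z
  have upper := le_add_inner_add_of_lipschitzWith hg hK y z
  have hzx : z - x = (y - x) - (K : ℝ)⁻¹ • w := by simp only [z]; abel
  have hzy : z - y = -((K : ℝ)⁻¹ • w) := by simp only [z]; abel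
  have hw : ⟪g y, w⟫ - ⟪g x, w⟫ = ‖w‖ ^ 2 := by
    rw [← inner_sub_left, real_inner_self_eq_norm_sq]
  rw [hzx, inner_sub_right, real_inner_smul_right] at lower
  rw [hzy, inner_neg_right, real_inner_smul_right, norm_neg, norm_smul, mul_pow,
    Real.norm_eq_abs, sq_abs] at upper
  have : (K : ℝ) / 2 * ((K : ℝ)⁻¹ ^ 2 * ‖w‖ ^ 2) = (2 * (K : ℝ))⁻¹ * ‖w‖ ^ 2 := by
    field_simp
  have : (K : ℝ)⁻¹ * ⟪g y, w⟫ - (K : ℝ)⁻¹ * ⟪g x, w⟫ = 2 * ((2 * (K : ℝ))⁻¹ * ‖w‖ ^ 2) := by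
    rw [← mul_sub, hw]; field_simp
  linarith

theorem ConvexOn.norm_sub_sq_le_mul_inner_of_lipschitzWith {K : ℝ≥0} (hf : ConvexOn ℝ univ f)
    (hg : ∀ x, HasGradientAt f (g x) x) (hK : LipschitzWith K g) (x y : E) :
    ‖g x - g y‖ ^ 2 ≤ K * ⟪g x - g y, x - y⟫ := by
  rcases eq_zero_or_pos K with hK₀ | hK₀
  · have : g x - g y = 0 := by
      simpa [hK₀, dist_eq_norm, sub_eq_zero] using hK.dist_le_mul x y
    simp [this]
  have hxy := hf.add_inner_sub_add_norm_sq_le_of_lipschitzWith hg hK hK₀ x y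
  have hyx := hf.add_inner_sub_add_norm_sq_le_of_lipschitzWith hg hK hK₀ y x
  rw [norm_sub_rev, ← neg_sub x y, inner_neg_right] at hxy
  have hsum : (K : ℝ)⁻¹ * ‖g x - g y‖ ^ 2 ≤ ⟪g x - g y, x - y⟫ := by
    rw [inner_sub_left]
    have : (2 * (K : ℝ))⁻¹ = (K : ℝ)⁻¹ / 2 := by ring
    rw [this] at hxy hyx
    linarith
  have hK' : (0 : ℝ) < K := hK₀
  calc ‖g x - g y‖ ^ 2 = K * ((K : ℝ)⁻¹ * ‖g x - g y‖ ^ 2) := by field_simp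
    _ ≤ K * ⟪g x - g y, x - y⟫ := by gcongr

end SmoothConvex

theorem sum_mul_norm_inv_smul_gradient_sub_sq_le {E : Type*} [NormedAddCommGroup E]
    [InnerProductSpace ℝ E] [CompleteSpace E] [Nontrivial E] {n : ℕ} {f : Fin n → E → ℝ}
    {gf : Fin n → E → E} (hgrad : ∀ i x, HasGradientAt (f i) (gf i x) x)
    (hconv : ∀ i, ConvexOn ℝ univ (f i)) {L : Fin n → ℝ}
    (hLip : ∀ i x y, ‖gf i x - gf i y‖ ≤ L i * ‖x - y‖) {q : Fin n → ℝ} (hq : ∀ i, 0 < q i)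
    {LΩ : ℝ} (hL : ∀ i, L i / (n * q i) ≤ LΩ) (x y : E) :
    ∑ i, q i * ‖(q i * n)⁻¹ • (gf i x - gf i y)‖ ^ 2
      ≤ LΩ * ∑ i, q i * ⟪x - y, (q i * n)⁻¹ • (gf i x - gf i y)⟫ := by
  refine sum_mul_norm_inv_smul_sq_le hq hL (fun i => ?_) fun i =>
    (hconv i).inner_sub_nonneg_of_hasGradientAt (hgrad i) x y
  have hLipWith : LipschitzWith ⟨L i, nonneg_of_norm_sub_le_mul_norm_sub (hLip i)⟩ (gf i) :=
    .of_dist_le_mul fun x y => by rw [dist_eq_norm, dist_eq_norm]; exact hLip i x y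
  exact (hconv i).norm_sub_sq_le_mul_inner_of_lipschitzWith (hgrad i) hLipWith x y

theorem sq_mul_norm_sub_sq_le_sum_mul_norm_sq {d n : ℕ} {f : Fin n → Euc d → ℝ}
    {gf : Fin n → Euc d → Euc d} {μ : ℝ} (hμ : 0 ≤ μ)
    (hsc : ∀ x y, Favg f x + ⟪gAvg gf x, y - x⟫ + μ / 2 * ‖y - x‖ ^ 2 ≤ Favg f y)
    {q : Fin n → ℝ} (hq : ∀ i, 0 < q i) (hqs : ∑ i, q i = 1) (x y : Euc d) :
    μ ^ 2 * ‖x - y‖ ^ 2 ≤ ∑ i, q i * ‖(q i * n)⁻¹ • (gf i x - gf i y)‖ ^ 2 := by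
  have hsum : gAvg gf x - gAvg gf y = ∑ i, q i • (q i * n)⁻¹ • (gf i x - gf i y) := by
    simp only [gAvg, ← smul_sub, ← Finset.sum_sub_distrib, Finset.smul_sum, smul_smul]
    refine Finset.sum_congr rfl fun i _ => ?_
    rw [mul_inv, ← mul_assoc, mul_inv_cancel₀ (hq i).ne', one_mul]
  calc μ ^ 2 * ‖x - y‖ ^ 2 ≤ ‖gAvg gf x - gAvg gf y‖ ^ 2 :=
        sq_mul_norm_sq_le_of_mul_norm_sq_le_inner hμ
          (mul_norm_sub_sq_le_inner_of_first_order_bound hsc x y)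
    _ ≤ _ := hsum ▸ norm_sum_smul_sq_le (fun i _ => (hq i).le) hqs _

section SamplingWeights

variable {α β : Type*} [Fintype α] [Fintype β] [DecidableEq β] {q : α → ℝ}

theorem sum_prod_eq_one (hq : ∑ i, q i = 1) : ∑ ι : β → α, ∏ k, q (ι k) = 1 := by
  rw [← Fintype.prod_sum, hq, Finset.prod_const_one]

theorem sum_prod_mul_apply (hq : ∑ i, q i = 1) (j : β) (h : α → ℝ) :
    ∑ ι : β → α, (∏ k, q (ι k)) * h (ι j) = ∑ i, q i * h i := by
  calc ∑ ι : β → α, (∏ k, q (ι k)) * h (ι j)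
      = ∑ ι : β → α, ∏ k, q (ι k) * if k = j then h (ι k) else 1 := by
        simp only [Finset.prod_mul_distrib, Finset.prod_ite_eq', Finset.mem_univ, if_true]
    _ = ∏ k, ∑ i, q i * if k = j then h i else 1 :=
        (Fintype.prod_sum fun k i => q i * if k = j then h i else 1).symm
    _ = ∑ i, q i * h i := by
        simp [apply_ite, hq]

theorem sum_prod_mul_average {b : ℕ} (hb : b ≠ 0) (hq : ∑ i, q i = 1) (h : α → ℝ) :
    ∑ ι : Fin b → α, (∏ k, q (ι k)) * ((b : ℝ)⁻¹ * ∑ j, h (ι j)) = ∑ i, q i * h i := by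
  simp_rw [Finset.mul_sum, mul_left_comm _ (b : ℝ)⁻¹]
  rw [Finset.sum_comm]
  simp_rw [← Finset.mul_sum, sum_prod_mul_apply hq, Finset.sum_const, Finset.card_univ,
    Fintype.card_fin, nsmul_eq_mul]
  field_simp

variable {E : Type*} [NormedAddCommGroup E] [InnerProductSpace ℝ E]

theorem sum_prod_mul_inner_average {b : ℕ} (hb : b ≠ 0) (hq : ∑ i, q i = 1)
    (δ : E) (c : α → E) :
    ∑ ι : Fin b → α, (∏ k, q (ι k)) * ⟪δ, (b : ℝ)⁻¹ • ∑ j, c (ι j)⟫ = ∑ i, q i * ⟪δ, c i⟫ := by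
  simp_rw [real_inner_smul_right, inner_sum]
  exact sum_prod_mul_average hb hq fun i => ⟪δ, c i⟫

theorem sum_prod_mul_norm_average_sq_le {b : ℕ} (hb : b ≠ 0) (hq₀ : ∀ i, 0 ≤ q i)
    (hq : ∑ i, q i = 1) (c : α → E) :
    ∑ ι : Fin b → α, (∏ k, q (ι k)) * ‖(b : ℝ)⁻¹ • ∑ j, c (ι j)‖ ^ 2 ≤ ∑ i, q i * ‖c i‖ ^ 2 := by
  have hw : ∑ _j : Fin b, (b : ℝ)⁻¹ = 1 := by simp [hb]
  calc ∑ ι : Fin b → α, (∏ k, q (ι k)) * ‖(b : ℝ)⁻¹ • ∑ j, c (ι j)‖ ^ 2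
      ≤ ∑ ι : Fin b → α, (∏ k, q (ι k)) * ((b : ℝ)⁻¹ * ∑ j, ‖c (ι j)‖ ^ 2) := by
        refine Finset.sum_le_sum fun ι _ => ?_
        gcongr
        · exact Finset.prod_nonneg fun k _ => hq₀ _
        · rw [Finset.smul_sum, Finset.mul_sum]
          exact norm_sum_smul_sq_le (fun _ _ => by positivity) hw _
    _ = ∑ i, q i * ‖c i‖ ^ 2 := sum_prod_mul_average hb hq fun i => ‖c i‖ ^ 2

end SamplingWeights

theorem le_of_forall_mem_Ioc_le_add_mul {a b c : ℝ} (h : ∀ s ∈ Ioc (0 : ℝ) 1, a ≤ b + s * c) :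
    a ≤ b := by
  have hlim : Tendsto (fun s : ℝ => b + s * c) (𝓝[>] 0) (𝓝 b) := by
    have : Continuous fun s : ℝ => b + s * c := by fun_prop
    simpa using (this.tendsto 0).mono_left nhdsWithin_le_nhds
  exact ge_of_tendsto hlim (eventually_of_mem (Ioc_mem_nhdsGT zero_lt_one) h)

section QuadraticForm

variable {d : ℕ} {M : Matrix (Fin d) (Fin d) ℝ}

theorem qf_add (hM : M.IsHermitian) (x y : Euc d) :
    qf M (x + y) = qf M x + 2 * ⟪x, mdot M y⟫ + qf M y := by
  have hsymm := Matrix.isSymmetric_toEuclideanLin_iff.2 hM y x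
  simp only [qf, mdot, map_add, inner_add_left, inner_add_right] at hsymm ⊢
  rw [← hsymm, real_inner_comm x]
  ring

theorem qf_smul (c : ℝ) (x : Euc d) : qf M (c • x) = c ^ 2 * qf M x := by
  simp only [qf, mdot, map_smul, real_inner_smul_left, real_inner_smul_right]
  ring

theorem qf_nonneg (hM : M.PosSemidef) (x : Euc d) : 0 ≤ qf M x :=
  (Matrix.isPositive_toEuclideanLin_iff.2 hM).inner_nonneg_right x

end QuadraticForm

namespace IsProxE

variable {d : ℕ} {R : Euc d → EReal} {M : Matrix (Fin d) (Fin d) ℝ} {w p : Euc d}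

theorem ne_top (hR : ERealProper R) (hp : IsProxE R M w p) : R p ≠ ⊤ := by
  obtain ⟨x₀, hx₀⟩ := hR.2
  intro htop
  have := hp x₀
  rw [htop, EReal.coe_add_top, top_le_iff] at this
  exact (EReal.add_lt_top (EReal.coe_ne_top _) hx₀).ne this

theorem toReal_sub_le_inner (hM : M.IsHermitian) (hR : ERealProper R) (hconv : ERealConvexOn R)
    (hp : IsProxE R M w p) {y : Euc d} (hy : R y ≠ ⊤) :
    (R p).toReal - (R y).toReal ≤ ⟪p - w, mdot M (y - p)⟫ := by
  have hRp : R p = ((R p).toReal : EReal) := (EReal.coe_toReal (hp.ne_top hR) (hR.1 p)).symm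
  have hRy : R y = ((R y).toReal : EReal) := (EReal.coe_toReal hy (hR.1 y)).symm
  refine le_of_forall_mem_Ioc_le_add_mul (c := 2⁻¹ * qf M (y - p)) fun s ⟨hs₀, hs₁⟩ => ?_
  have hmin := hp ((1 - s) • p + s • y)
  have hRs := hconv p y (1 - s) s (by linarith) hs₀.le (by ring)
  rw [hRp, hRy] at hRs
  rw [hRp] at hmin
  have hreal : 2⁻¹ * qf M (p - w) + (R p).toReal ≤
      2⁻¹ * qf M ((1 - s) • p + s • y - w) + ((1 - s) * (R p).toReal + s * (R y).toReal) := by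
    exact_mod_cast hmin.trans (add_le_add le_rfl hRs)
  have hexp : (1 - s) • p + s • y - w = (p - w) + s • (y - p) := by module
  rw [hexp, qf_add hM, qf_smul] at hreal
  simp only [mdot, map_smul, real_inner_smul_right] at hreal ⊢
  nlinarith

theorem qf_sub_le (hM : M.PosSemidef) (hR : ERealProper R) (hconv : ERealConvexOn R)
    {w' p' : Euc d} (hp : IsProxE R M w p) (hp' : IsProxE R M w' p') :
    qf M (p' - p) ≤ qf M (w' - w) := by
  have h₁ := hp.toReal_sub_le_inner hM.1 hR hconv (hp'.ne_top hR)
  have h₂ := hp'.toReal_sub_le_inner hM.1 hR hconv (hp.ne_top hR)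
  have hmono : qf M (p' - p) ≤ ⟪w' - w, mdot M (p' - p)⟫ := by
    have : p - p' = -(p' - p) := (neg_sub p' p).symm
    rw [this] at h₂
    simp only [mdot, map_neg, inner_neg_right] at h₂
    have : w' - w = (p - w) - (p' - w') + (p' - p) := by abel
    rw [this, inner_add_left, inner_sub_left]
    unfold qf mdot at *
    linarith
  have hsplit := qf_add hM.1 (w' - w - (p' - p)) (p' - p)
  rw [sub_add_cancel, inner_sub_left] at hsplit
  have := qf_nonneg hM (w' - w - (p' - p))
  unfold qf at hmono this hsplit ⊢
  linarith

end IsProxE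

section Diagonal

variable {d : ℕ} {u : Fin d → ℝ}

theorem mdot_diagonal_apply (x : Euc d) (j : Fin d) : mdot (Matrix.diagonal u) x j = u j * x j := by
  simp [mdot, Matrix.toLpLin_apply, Matrix.mulVec_diagonal]

theorem qf_diagonal (x : Euc d) : qf (Matrix.diagonal u) x = ∑ j, u j * x j ^ 2 := by
  simp only [qf, PiLp.inner_apply, RCLike.inner_apply, conj_trivial, mdot_diagonal_apply]
  exact Finset.sum_congr rfl fun j _ => by ring

theorem inv_diagonal_of_ne_zero (hu : ∀ j, u j ≠ 0) :
    (Matrix.diagonal u)⁻¹ = Matrix.diagonal u⁻¹ := by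
  refine Matrix.inv_eq_left_inv ?_
  rw [Matrix.diagonal_mul_diagonal, ← Matrix.diagonal_one]
  exact congrArg Matrix.diagonal (funext fun j => inv_mul_cancel₀ (hu j))

theorem qf_diagonal_le {c : ℝ} (hc : ∀ j, u j ≤ c) (x : Euc d) :
    qf (Matrix.diagonal u) x ≤ c * ‖x‖ ^ 2 := by
  rw [qf_diagonal, EuclideanSpace.norm_sq_eq, Finset.mul_sum]
  refine Finset.sum_le_sum fun j _ => ?_
  rw [Real.norm_eq_abs, sq_abs]
  exact mul_le_mul_of_nonneg_right (hc j) (sq_nonneg _)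

theorem mul_qf_inv_diagonal_le (hu : ∀ j, 0 < u j) {c : ℝ} (hc : ∀ j, c ≤ u j) (x : Euc d) :
    c * qf (Matrix.diagonal u)⁻¹ x ≤ ‖x‖ ^ 2 := by
  rw [inv_diagonal_of_ne_zero fun j => (hu j).ne', qf_diagonal, EuclideanSpace.norm_sq_eq,
    Finset.mul_sum]
  gcongr with j
  rw [Pi.inv_apply, ← mul_assoc, Real.norm_eq_abs, sq_abs]
  exact mul_le_of_le_one_left (sq_nonneg _) ((div_le_one (hu j)).2 (hc j))

theorem qf_inv_diagonal_sub_mdot (hu : ∀ j, u j ≠ 0) (x z : Euc d) :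
    qf (Matrix.diagonal u)⁻¹ (x - mdot (Matrix.diagonal u) z)
      = qf (Matrix.diagonal u)⁻¹ x - 2 * ⟪x, z⟫ + qf (Matrix.diagonal u) z := by
  simp only [inv_diagonal_of_ne_zero hu, qf_diagonal, PiLp.inner_apply, RCLike.inner_apply,
    conj_trivial, PiLp.sub_apply, mdot_diagonal_apply, Pi.inv_apply, Finset.mul_sum,
    ← Finset.sum_sub_distrib, ← Finset.sum_add_distrib]
  refine Finset.sum_congr rfl fun j _ => ?_
  field_simp [hu j]
  ring

theorem qf_inv_diagonal_prox_step_le {R : Euc d → EReal} (hR : ERealProper R)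
    (hconv : ERealConvexOn R) (hu : ∀ j, 0 < u j) {c : ℝ} (hc : ∀ j, u j ≤ c)
    {x v x' z x'' : Euc d}
    (h₁ : IsProxE R (Matrix.diagonal u)⁻¹ (x - mdot (Matrix.diagonal u) v) x')
    (h₂ : IsProxE R (Matrix.diagonal u)⁻¹ (x' - mdot (Matrix.diagonal u) (z + v)) x'') :
    qf (Matrix.diagonal u)⁻¹ (x'' - x')
      ≤ qf (Matrix.diagonal u)⁻¹ (x' - x) - 2 * ⟪x' - x, z⟫ + c * ‖z‖ ^ 2 := by
  have hu' : ∀ j, u j ≠ 0 := fun j => (hu j).ne'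
  have hpsd : (Matrix.diagonal u)⁻¹.PosSemidef := by
    rw [inv_diagonal_of_ne_zero hu']
    exact Matrix.PosSemidef.diagonal fun j => (inv_pos.2 (hu j)).le
  calc qf (Matrix.diagonal u)⁻¹ (x'' - x')
      ≤ qf (Matrix.diagonal u)⁻¹
          ((x' - mdot (Matrix.diagonal u) (z + v)) - (x - mdot (Matrix.diagonal u) v)) :=
        h₁.qf_sub_le hpsd hR hconv h₂
    _ = qf (Matrix.diagonal u)⁻¹ ((x' - x) - mdot (Matrix.diagonal u) z) := by
        simp only [mdot, map_add]; abel_nf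
    _ ≤ qf (Matrix.diagonal u)⁻¹ (x' - x) - 2 * ⟪x' - x, z⟫ + c * ‖z‖ ^ 2 := by
        rw [qf_inv_diagonal_sub_mdot hu']
        gcongr
        exact qf_diagonal_le hc z

end Diagonal

theorem prox_recursive_step_linear_contraction_general {d n b : ℕ} (hb : 1 ≤ b)
    (f : Fin n → Euc d → ℝ) (gf : Fin n → Euc d → Euc d)
    (hgrad : ∀ i x, HasGradientAt (f i) (gf i x) x)
    (hconvf : ∀ i, ConvexOn ℝ Set.univ (f i))
    (L : Fin n → ℝ) (hLip : ∀ i x y, ‖gf i x - gf i y‖ ≤ L i * ‖x - y‖)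
    (q : Fin n → ℝ) (hq : ∀ i, 0 < q i) (hqs : ∑ i, q i = 1)
    (LΩ : ℝ) (hLΩ : IsGreatest (Set.range fun i => L i / ((n : ℝ) * q i)) LΩ)
    (R : Euc d → EReal) (hproper : ERealProper R)
    (hconvR : ERealConvexOn R)
    (μF : ℝ) (hμF : 0 < μF)
    (hsc : ∀ x y : Euc d,
      Favg f x + ⟪gAvg gf x, y - x⟫ + μF / 2 * ‖y - x‖ ^ 2 ≤ Favg f y)
    (u : Fin d → ℝ) (hu : ∀ j, 0 < u j ∧ u j ≤ 2 / LΩ)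
    (umax umin : ℝ) (humax : IsGreatest (Set.range u) umax) (humin : IsLeast (Set.range u) umin)
    (wprev vprev wt : Euc d)
    (hwt : IsProxE R (Matrix.diagonal u)⁻¹ (wprev - mdot (Matrix.diagonal u) vprev) wt)
    (wnext : (Fin b → Fin n) → Euc d)
    (hwnext : ∀ ι : Fin b → Fin n, IsProxE R (Matrix.diagonal u)⁻¹
      (wt - mdot (Matrix.diagonal u) ((b : ℝ)⁻¹ •
        ∑ j : Fin b, (q (ι j) * (n : ℝ))⁻¹ • (gf (ι j) wt - gf (ι j) wprev) + vprev))
      (wnext ι)) :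
    ∑ ι : Fin b → Fin n, (∏ j : Fin b, q (ι j)) * qf (Matrix.diagonal u)⁻¹ (wnext ι - wt)
      ≤ (1 - μF ^ 2 * umin * (2 / LΩ - umax)) * qf (Matrix.diagonal u)⁻¹ (wt - wprev) := by
  obtain ⟨j₀, -⟩ := humax.1
  have : Nonempty (Fin d) := ⟨j₀⟩
  have hu₀ : ∀ j, 0 < u j := fun j => (hu j).1
  have hLΩ₀ : 0 < LΩ := (div_pos_iff_of_pos_left two_pos).1 ((hu₀ j₀).trans_le (hu j₀).2)
  have humax₀ : 0 ≤ umax := (hu₀ j₀).le.trans (humax.2 ⟨j₀, rfl⟩)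
  have hgap : 0 ≤ 2 / LΩ - umax := by
    obtain ⟨j, rfl⟩ := humax.1
    exact sub_nonneg.2 (hu j).2
  have hb₀ : b ≠ 0 := Nat.one_le_iff_ne_zero.1 hb
  set U := Matrix.diagonal u
  set δ := wt - wprev
  set c : Fin n → Euc d := fun i => (q i * n)⁻¹ • (gf i wt - gf i wprev)
  set γ := ∑ i, q i * ⟪δ, c i⟫
  have hvar : ∑ i, q i * ‖c i‖ ^ 2 ≤ LΩ * γ :=
    sum_mul_norm_inv_smul_gradient_sub_sq_le hgrad hconvf hLip hq (fun i => hLΩ.2 ⟨i, rfl⟩) wt wprev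
  have hcurv : μF ^ 2 * (umin * qf U⁻¹ δ) ≤ LΩ * γ :=
    calc μF ^ 2 * (umin * qf U⁻¹ δ) ≤ μF ^ 2 * ‖δ‖ ^ 2 := by
          gcongr; exact mul_qf_inv_diagonal_le hu₀ (fun j => humin.2 ⟨j, rfl⟩) δ
      _ ≤ LΩ * γ := (sq_mul_norm_sub_sq_le_sum_mul_norm_sq hμF.le hsc hq hqs wt wprev).trans hvar
  calc ∑ ι : Fin b → Fin n, (∏ j, q (ι j)) * qf U⁻¹ (wnext ι - wt)
      ≤ ∑ ι : Fin b → Fin n, (∏ j, q (ι j)) * (qf U⁻¹ δ - 2 * ⟪δ, (b : ℝ)⁻¹ • ∑ j, c (ι j)⟫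
          + umax * ‖(b : ℝ)⁻¹ • ∑ j, c (ι j)‖ ^ 2) := by
        refine Finset.sum_le_sum fun ι _ => ?_
        gcongr
        · exact Finset.prod_nonneg fun j _ => (hq _).le
        · exact qf_inv_diagonal_prox_step_le hproper hconvR hu₀ (fun j => humax.2 ⟨j, rfl⟩) hwt
            (hwnext ι)
    _ = qf U⁻¹ δ - 2 * γ
          + umax * ∑ ι : Fin b → Fin n, (∏ j, q (ι j)) * ‖(b : ℝ)⁻¹ • ∑ j, c (ι j)‖ ^ 2 := by
        simp only [mul_add, mul_sub, Finset.sum_add_distrib, Finset.sum_sub_distrib,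
          ← Finset.sum_mul, sum_prod_eq_one hqs, one_mul, mul_left_comm _ (2 : ℝ),
          mul_left_comm _ umax, ← Finset.mul_sum, sum_prod_mul_inner_average hb₀ hqs, γ]
    _ ≤ qf U⁻¹ δ - 2 * γ + umax * (LΩ * γ) := by
        gcongr
        exact (sum_prod_mul_norm_average_sq_le hb₀ (fun i => (hq i).le) hqs c).trans hvar
    _ ≤ (1 - μF ^ 2 * umin * (2 / LΩ - umax)) * qf U⁻¹ δ := by
        have hgain : (2 / LΩ - umax) * (LΩ * γ) = 2 * γ - umax * (LΩ * γ) := by field_simp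
        linarith [mul_le_mul_of_nonneg_left hcurv hgap]

/-- as in Statement 7, with in addition `F` being `μ_F`-strongly convex and
`U = Diag(u)` diagonal with entries `0 < uʲ ≤ 2/L_Ω`; with `u_max = max_j uʲ`,
`u_min = min_j uʲ`, the expected squared step contracts:
`E_ι ‖w_{t+1}(ι) − w_t‖_{U⁻¹}² ≤ (1 − μ_F² u_min (2/L_Ω − u_max)) ‖w_t − w_{t−1}‖_{U⁻¹}²`. -/
theorem prox_recursive_step_linear_contraction {d n b : ℕ} (hn : 0 < n) (hb : 1 ≤ b) (hbn : b ≤ n)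
    (f : Fin n → Euc d → ℝ) (gf : Fin n → Euc d → Euc d)
    (hgrad : ∀ i x, HasGradientAt (f i) (gf i x) x)
    (hconvf : ∀ i, ConvexOn ℝ Set.univ (f i))
    (L : Fin n → ℝ) (hLip : ∀ i x y, ‖gf i x - gf i y‖ ≤ L i * ‖x - y‖)
    (q : Fin n → ℝ) (hq : ∀ i, 0 < q i) (hqs : ∑ i, q i = 1)
    (LΩ : ℝ) (hLΩ : IsGreatest (Set.range fun i => L i / ((n : ℝ) * q i)) LΩ)
    (R : Euc d → EReal) (hproper : ERealProper R) (hlsc : LowerSemicontinuous R)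
    (hconvR : ERealConvexOn R)
    (μF : ℝ) (hμF : 0 < μF)
    (hsc : ∀ x y : Euc d,
      Favg f x + ⟪gAvg gf x, y - x⟫ + μF / 2 * ‖y - x‖ ^ 2 ≤ Favg f y)
    (u : Fin d → ℝ) (hu : ∀ j, 0 < u j ∧ u j ≤ 2 / LΩ)
    (umax umin : ℝ) (humax : IsGreatest (Set.range u) umax) (humin : IsLeast (Set.range u) umin)
    (wprev vprev wt : Euc d)
    (hwt : IsProxE R (Matrix.diagonal u)⁻¹ (wprev - mdot (Matrix.diagonal u) vprev) wt)
    (wnext : (Fin b → Fin n) → Euc d)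
    (hwnext : ∀ ι : Fin b → Fin n, IsProxE R (Matrix.diagonal u)⁻¹
      (wt - mdot (Matrix.diagonal u) ((b : ℝ)⁻¹ •
        ∑ j : Fin b, (q (ι j) * (n : ℝ))⁻¹ • (gf (ι j) wt - gf (ι j) wprev) + vprev))
      (wnext ι)) :
    ∑ ι : Fin b → Fin n, (∏ j : Fin b, q (ι j)) * qf (Matrix.diagonal u)⁻¹ (wnext ι - wt)
      ≤ (1 - μF ^ 2 * umin * (2 / LΩ - umax)) * qf (Matrix.diagonal u)⁻¹ (wt - wprev) :=
  prox_recursive_step_linear_contraction_general hb f gf hgrad hconvf L hLip q hq hqs LΩ hLΩ R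
    hproper hconvR μF hμF hsc u hu umax umin humax humin wprev vprev wt hwt wnext hwnext
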